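/- If s is a b-shift of f, then for every w, F̂(w) = (-1)^{w·s + b} · F̂(w); hence F̂(w) = 0 whenever w·s ≠ b. -/

import Mathlib

/-!
Substituting `x ↦ x + s` in the sum defining `F̂(w)` multiplies every summand by the constant
sign `(-1)^(w·s + b)`, because `x ↦ w·x + f x` then shifts by `w·s + b`. So `F̂(w)` is fixed by that
sign, and when the sign is `-1`, that is when `w·s ≠ b`, it is its own negative.
-/

noncomputable def fourierC (n : ℕ) (f : (Fin n → ZMod 2) → ZMod 2) (w : Fin n → ZMod 2) : ℝ :=
  (1 / 2 ^ n : ℝ) * ∑ x : Fin n → ZMod 2, (-1 : ℝ) ^ (((∑ i, w i * x i) + f x).val)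

lemma ZMod.neg_one_pow_val_add (a b : ZMod 2) :
    (-1 : ℝ) ^ (a + b).val = (-1 : ℝ) ^ a.val * (-1 : ℝ) ^ b.val := by
  rw [ZMod.val_add, ← neg_one_pow_eq_pow_mod_two, pow_add]

lemma sum_neg_one_pow_val_eq_mul_of_add_right {G : Type*} [AddGroup G] [Fintype G]
    (g : G → ZMod 2) (s : G) (c : ZMod 2) (hg : ∀ x, g (x + s) = g x + c) :
    ∑ x, (-1 : ℝ) ^ (g x).val = (-1 : ℝ) ^ c.val * ∑ x, (-1 : ℝ) ^ (g x).val :=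
  calc ∑ x, (-1 : ℝ) ^ (g x).val = ∑ x, (-1 : ℝ) ^ (g (x + s)).val :=
        (Equiv.sum_comp (Equiv.addRight s) _).symm
    _ = (-1 : ℝ) ^ c.val * ∑ x, (-1 : ℝ) ^ (g x).val := by
        simp only [hg, ZMod.neg_one_pow_val_add, Finset.mul_sum, mul_comm]

lemma eq_zero_of_eq_neg_one_pow_val_mul {a : ℝ} {c : ZMod 2} (hc : c ≠ 0)
    (ha : a = (-1 : ℝ) ^ c.val * a) : a = 0 := by
  obtain rfl : c = 1 := by fin_cases c; exacts [absurd rfl hc, rfl]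
  rw [ZMod.val_one, pow_one, neg_one_mul] at ha
  linarith

lemma fourierC_eq_neg_one_pow_mul_of_add_right {n : ℕ} {f : (Fin n → ZMod 2) → ZMod 2}
    {s : Fin n → ZMod 2} {b : ZMod 2} (hs : ∀ x, f (x + s) = f x + b) (w : Fin n → ZMod 2) :
    fourierC n f w = (-1 : ℝ) ^ (((∑ i, w i * s i) + b).val) * fourierC n f w := by
  have hshift : ∀ x, w ⬝ᵥ (x + s) + f (x + s) = (w ⬝ᵥ x + f x) + (w ⬝ᵥ s + b) := by
    intro x
    rw [dotProduct_add, hs]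
    ring
  unfold fourierC
  conv_lhs => rw [sum_neg_one_pow_val_eq_mul_of_add_right (fun x ↦ ∑ i, w i * x i + f x) s
    (∑ i, w i * s i + b) hshift]
  ring

theorem bshift_fourier_vanishes (n : ℕ) (f : (Fin n → ZMod 2) → ZMod 2)
    (s : Fin n → ZMod 2) (b : ZMod 2) (hs : ∀ x, f (x + s) = f x + b) :
    ∀ w : Fin n → ZMod 2,
      fourierC n f w = (-1 : ℝ) ^ (((∑ i, w i * s i) + b).val) * fourierC n f w ∧
        ((∑ i, w i * s i) ≠ b → fourierC n f w = 0) := by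
  intro w
  have hfix := fourierC_eq_neg_one_pow_mul_of_add_right hs w
  refine ⟨hfix, fun hne ↦ eq_zero_of_eq_neg_one_pow_val_mul ?_ hfix⟩
  exact fun h ↦ hne (CharTwo.add_eq_zero.mp h)
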